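/- arXiv:1807.03462 — 2 statements merged into one kernel-verified Lean document; each statement's English description precedes it below -/
import Mathlib

section
/- Suppose F_n(q) = α on the interval [q_L, q_H) with q_L, q_H consecutive sample points, and let q_α^log ∈ (q_L, q_H) be the unique zero of G(q) = (1-α) Σ_{i: x_i < q} log(q − x_i) − α Σ_{i: x_i > q} log(x_i − q). Then the unique minimizer q_{α,ε} of E_n L_{α,ε}(x,·) converges to q_α^log as ε ↓ 0. -/
/-!
Since no sample lies in the gap `(q_L, q_H)`, for `q` in the gap `ε ↦ E_n L_{α,ε}(x, q)` is
differentiable at `ε = 0`, with derivative `E_n[L_{α,0}(x, q) log |q - x|]`. At `ε = 0` the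
empirical check loss has slope `F_n(q) - α = 0`, so it is flat on the gap. The `q`-derivative of
the `ε`-derivative is `G / n`, and `G` is strictly increasing on the gap, so `q_α^log` is the strict
minimizer of the `ε`-derivative there. Hence every `c ≠ q_α^log` in the gap loses against
`q_α^log` for all small `ε > 0`, and convexity of `E_n L_{α,ε}` traps its minimizer between such
points.
-/

open Finset Real Filter Topology

noncomputable def L (α ε x q : ℝ) : ℝ :=
  if x ≤ q then (1 - α) * (q - x) ^ (1 + ε) else α * (x - q) ^ (1 + ε)

noncomputable def EnL (n : ℕ) (α ε : ℝ) (x : Fin n → ℝ) (q : ℝ) : ℝ :=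
  (1 / (n : ℝ)) * ∑ i, L α ε (x i) q

noncomputable def Fn (n : ℕ) (x : Fin n → ℝ) (t : ℝ) : ℝ :=
  ((Finset.univ.filter (fun i => x i ≤ t)).card : ℝ) / n

noncomputable def G (n : ℕ) (x : Fin n → ℝ) (α q : ℝ) : ℝ :=
  (1 - α) * ∑ i ∈ Finset.univ.filter (fun i => x i < q), Real.log (q - x i)
    - α * ∑ i ∈ Finset.univ.filter (fun i => q < x i), Real.log (x i - q)

theorem ConvexOn.rpow {E : Type*} [AddCommGroup E] [Module ℝ E] {s : Set E} {f : E → ℝ} {p : ℝ}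
    (hf : ConvexOn ℝ s f) (hf₀ : ∀ x ∈ s, 0 ≤ f x) (hp : 1 ≤ p) :
    ConvexOn ℝ s fun x => f x ^ p := by
  refine ⟨hf.1, fun x hx y hy a b ha hb hab => ?_⟩
  calc f (a • x + b • y) ^ p ≤ (a • f x + b • f y) ^ p :=
        rpow_le_rpow (hf₀ _ (hf.1 hx hy ha hb hab)) (hf.2 hx hy ha hb hab) (by linarith)
    _ ≤ a • f x ^ p + b • f y ^ p := (convexOn_rpow hp).2 (hf₀ x hx) (hf₀ y hy) ha hb hab

theorem ConvexOn.fun_sum {E ι : Type*} [AddCommGroup E] [Module ℝ E] {s : Set E}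
    (hs : Convex ℝ s) (t : Finset ι) {f : ι → E → ℝ} (hf : ∀ i ∈ t, ConvexOn ℝ s (f i)) :
    ConvexOn ℝ s fun x => ∑ i ∈ t, f i x := by
  classical
  induction t using Finset.induction_on with
  | empty => simpa using convexOn_const 0 hs
  | insert i t hi ih =>
    simp only [Finset.sum_insert hi]
    exact (hf i (mem_insert_self i t)).add (ih fun j hj => hf j (mem_insert_of_mem hj))

theorem ConvexOn.le_of_isMinOn_of_mem_segment {E : Type*} [AddCommGroup E] [Module ℝ E]
    {f : E → ℝ} {z m c : E} (hf : ConvexOn ℝ Set.univ f) (hz : IsMinOn f Set.univ z)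
    (hc : c ∈ segment ℝ z m) : f c ≤ f m :=
  (hf.le_on_segment (Set.mem_univ z) (Set.mem_univ m) hc).trans (max_le (hz trivial) le_rfl)

theorem eventually_lt_of_hasDerivAt {f g : ℝ → ℝ} {f' g' a : ℝ} (hf : HasDerivAt f f' a)
    (hg : HasDerivAt g g' a) (ha : f a = g a) (hlt : f' < g') :
    ∀ᶠ ε in 𝓝[>] a, f ε < g ε := by
  have hslope := hasDerivAt_iff_tendsto_slope.mp (hg.sub hf)
  filter_upwards [(hslope.eventually (eventually_gt_nhds (sub_pos.2 hlt))).filter_mono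
    (nhdsGT_le_nhdsNE a), self_mem_nhdsWithin] with ε hε hεa
  exact sub_pos.1 (pos_of_slope_pos (f := g - f) hεa hε (sub_eq_zero.2 ha.symm))

theorem lt_of_hasDerivAt_of_strictMonoOn {f f' : ℝ → ℝ} {s : Set ℝ} (hs : s.OrdConnected)
    (hf : ∀ y ∈ s, HasDerivAt f (f' y) y) (hf' : StrictMonoOn f' s) {m c : ℝ} (hm : m ∈ s)
    (hm₀ : f' m = 0) (hc : c ∈ s) (hcm : c ≠ m) : f m < f c := by
  have mvt {a b} (ha : a ∈ s) (hb : b ∈ s) (hab : a < b) :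
      ∃ ξ ∈ s, f' ξ * (b - a) = f b - f a ∧ a < ξ ∧ ξ < b := by
    obtain ⟨ξ, hξ, hslope⟩ := exists_hasDerivAt_eq_slope f f' hab
      (fun y hy => (hf y (hs.out ha hb hy)).continuousAt.continuousWithinAt)
      fun y hy => hf y (hs.out ha hb (Set.Ioo_subset_Icc_self hy))
    refine ⟨ξ, hs.out ha hb (Set.Ioo_subset_Icc_self hξ), ?_, hξ⟩
    rw [hslope, div_mul_cancel₀ _ (sub_ne_zero.2 hab.ne')]
  rcases hcm.lt_or_gt with hcm | hmc
  · obtain ⟨ξ, hξ, hslope, -, hξm⟩ := mvt hc hm hcm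
    nlinarith [hm₀ ▸ hf' hξ hm hξm]
  · obtain ⟨ξ, hξ, hslope, hmξ, -⟩ := mvt hm hc hmc
    nlinarith [hm₀ ▸ hf' hm hξ hmξ]

theorem tendsto_of_isMinOn_of_convexOn {ι : Type*} {l : Filter ι} {f : ι → ℝ → ℝ} {z : ι → ℝ}
    {m : ℝ} (hf : ∀ᶠ i in l, ConvexOn ℝ Set.univ (f i))
    (hz : ∀ᶠ i in l, IsMinOn (f i) Set.univ (z i))
    (hm : ∀ᶠ c in 𝓝[≠] m, ∀ᶠ i in l, f i m < f i c) : Tendsto z l (𝓝 m) := by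
  rw [tendsto_order]
  constructor
  · intro a ha
    obtain ⟨c, hc, hac, hcm⟩ :=
      ((hm.filter_mono (nhdsLT_le_nhdsNE m)).and (Ioo_mem_nhdsLT ha)).exists
    filter_upwards [hf, hz, hc] with i hfi hzi hci
    by_contra! hza
    refine hci.not_ge (hfi.le_of_isMinOn_of_mem_segment hzi ?_)
    rw [segment_eq_Icc (hza.trans (hac.le.trans hcm.le))]
    exact ⟨hza.trans hac.le, hcm.le⟩
  · intro b hb
    obtain ⟨c, hc, hmc, hcb⟩ :=
      ((hm.filter_mono (nhdsGT_le_nhdsNE m)).and (Ioo_mem_nhdsGT hb)).exists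
    filter_upwards [hf, hz, hc] with i hfi hzi hci
    by_contra! hbz
    refine hci.not_ge (hfi.le_of_isMinOn_of_mem_segment hzi ?_)
    rw [segment_symm, segment_eq_Icc (hmc.le.trans (hcb.le.trans hbz))]
    exact ⟨hmc.le, hcb.le.trans hbz⟩

noncomputable def quantileScore (α x q : ℝ) : ℝ :=
  if x ≤ q then 1 - α else -α

section Loss

variable {α ε x q : ℝ}

theorem L_zero : L α 0 x q = quantileScore α x q * (q - x) := by
  unfold L quantileScore
  split_ifs <;> simp only [add_zero, rpow_one]
  ring

theorem L_eq_max_rpow (hε : 1 + ε ≠ 0) :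
    L α ε x q = (1 - α) * max (q - x) 0 ^ (1 + ε) + α * max (x - q) 0 ^ (1 + ε) := by
  unfold L
  split_ifs with h
  · rw [max_eq_left (by linarith), max_eq_right (by linarith), zero_rpow hε, mul_zero, add_zero]
  · rw [max_eq_right (by linarith), max_eq_left (by linarith), zero_rpow hε, mul_zero, zero_add]

theorem convexOn_L (hα : α ∈ Set.Icc 0 1) (hε : 0 ≤ ε) (x : ℝ) :
    ConvexOn ℝ Set.univ (L α ε x) := by
  have hp : 1 ≤ 1 + ε := by linarith
  have hpos {f : ℝ → ℝ} (hf : ConvexOn ℝ Set.univ f) :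
      ConvexOn ℝ Set.univ fun q => max (f q) 0 ^ (1 + ε) :=
    (hf.sup (convexOn_const 0 convex_univ)).rpow (fun _ _ => le_max_right _ _) hp
  have hleft := hpos ((convexOn_id convex_univ).sub (concaveOn_const x convex_univ))
  have hright := hpos ((convexOn_const x convex_univ).sub (concaveOn_id convex_univ))
  refine ((hleft.smul (sub_nonneg.2 hα.2)).add (hright.smul hα.1)).congr fun q _ => ?_
  simp only [L_eq_max_rpow (by linarith : 1 + ε ≠ 0), Pi.add_apply, Pi.sub_apply, smul_eq_mul,
    id_eq]

theorem quantileScore_eventuallyEq (hxq : x ≠ q) :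
    quantileScore α x =ᶠ[𝓝 q] fun _ => quantileScore α x q := by
  rcases hxq.lt_or_gt with h | h
  · filter_upwards [eventually_gt_nhds h] with y hy
    simp only [quantileScore, if_pos hy.le, if_pos h.le]
  · filter_upwards [eventually_lt_nhds h] with y hy
    simp only [quantileScore, if_neg (not_le.2 hy), if_neg (not_le.2 h)]

theorem hasDerivAt_L_zero (hxq : x ≠ q) : HasDerivAt (L α 0 x) (quantileScore α x q) q := by
  have h : HasDerivAt (fun y => quantileScore α x q * (y - x)) (quantileScore α x q) q := by
    simpa using ((hasDerivAt_id q).sub_const x).const_mul (quantileScore α x q)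
  refine h.congr_of_eventuallyEq ?_
  filter_upwards [quantileScore_eventuallyEq hxq] with y hy
  rw [L_zero, hy]

theorem hasDerivAt_L_zero_mul_log (hxq : x ≠ q) :
    HasDerivAt (fun y => L α 0 x y * log (y - x))
      (quantileScore α x q * (log (q - x) + 1)) q := by
  have h := ((hasDerivAt_mul_log (sub_ne_zero.2 hxq.symm)).comp q
    ((hasDerivAt_id q).sub_const x)).const_mul (quantileScore α x q)
  rw [mul_one] at h
  refine h.congr_of_eventuallyEq ?_
  filter_upwards [quantileScore_eventuallyEq (α := α) hxq] with y hy
  simp only [L_zero, hy, Function.comp_apply, id_eq, mul_assoc]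

theorem hasDerivAt_L_eps (hxq : x ≠ q) :
    HasDerivAt (fun ε => L α ε x q) (L α 0 x q * log (q - x)) 0 := by
  have hexp : HasDerivAt (fun ε : ℝ => 1 + ε) 1 0 := (hasDerivAt_id 0).const_add 1
  unfold L
  split_ifs with h
  · exact ((hexp.const_rpow (sub_pos.2 (lt_of_le_of_ne h hxq))).const_mul (1 - α)).congr_deriv
      (by ring)
  · rw [← log_neg_eq_log, neg_sub]
    exact ((hexp.const_rpow (sub_pos.2 (lt_of_not_ge h))).const_mul α).congr_deriv (by ring)

theorem strictMonoOn_quantileScore_mul_log (hα : α ∈ Set.Ioo 0 1) {a b : ℝ}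
    (hx : x ∉ Set.Ioo a b) :
    StrictMonoOn (fun q => quantileScore α x q * log (q - x)) (Set.Ioo a b) := by
  intro q₁ hq₁ q₂ hq₂ hq
  rcases le_or_gt x a with hxa | hax
  · have h₁ : x ≤ q₁ := hxa.trans hq₁.1.le
    simp only [quantileScore, if_pos h₁, if_pos (h₁.trans hq.le)]
    exact mul_lt_mul_of_pos_left (log_lt_log (by linarith [hq₁.1]) (by linarith))
      (sub_pos.2 hα.2)
  · have hbx : b ≤ x := le_of_not_gt fun hxb => hx ⟨hax, hxb⟩
    have h₂ : q₂ < x := hq₂.2.trans_le hbx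
    simp only [quantileScore, if_neg (not_le.2 (hq.trans h₂)), if_neg (not_le.2 h₂)]
    rw [← log_neg_eq_log (q₁ - x), ← log_neg_eq_log (q₂ - x), neg_sub, neg_sub]
    exact mul_lt_mul_of_neg_left (log_lt_log (by linarith) (by linarith)) (neg_neg_of_pos hα.1)

end Loss

-- The `ε`-derivative of `EnL` at `ε = 0`; `Real.log` is even, so `log (q - x)` is `log |q - x|`.
noncomputable def EnLogLoss (n : ℕ) (α : ℝ) (x : Fin n → ℝ) (q : ℝ) : ℝ :=
  (1 / (n : ℝ)) * ∑ i, L α 0 (x i) q * log (q - x i)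

section Empirical

variable {n : ℕ} {α : ℝ} {x : Fin n → ℝ} {q : ℝ}

theorem convexOn_EnL (hα : α ∈ Set.Icc 0 1) {ε : ℝ} (hε : 0 ≤ ε) :
    ConvexOn ℝ Set.univ (EnL n α ε x) :=
  (ConvexOn.fun_sum convex_univ univ fun i _ => convexOn_L hα hε (x i)).smul
    (by positivity : (0 : ℝ) ≤ 1 / n)

theorem sum_quantileScore (hn : n ≠ 0) : ∑ i, quantileScore α (x i) q = n * (Fn n x q - α) := by
  have hscore (y : ℝ) : quantileScore α y q = (if y ≤ q then 1 else 0) - α := by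
    unfold quantileScore
    split_ifs <;> ring
  simp only [hscore, sum_sub_distrib, sum_boole, sum_const, card_univ, Fintype.card_fin,
    nsmul_eq_mul, Fn, mul_sub, mul_div_cancel₀ _ (Nat.cast_ne_zero.2 hn : (n : ℝ) ≠ 0)]

theorem G_eq_sum_quantileScore_mul_log :
    G n x α q = ∑ i, quantileScore α (x i) q * log (q - x i) := by
  rw [G, sum_filter, sum_filter, mul_sum, mul_sum, ← sum_sub_distrib]
  refine sum_congr rfl fun i _ => ?_
  rcases lt_trichotomy (x i) q with h | h | h
  · simp [quantileScore, h, h.le, h.not_gt]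
  · simp [h]
  · simp [quantileScore, h.not_ge, h.not_gt, ← log_neg_eq_log (q - x i)]

theorem strictMonoOn_G (hα : α ∈ Set.Ioo 0 1) (hn : 0 < n) {a b : ℝ}
    (hx : ∀ i, x i ∉ Set.Ioo a b) : StrictMonoOn (G n x α) (Set.Ioo a b) := by
  intro q₁ hq₁ q₂ hq₂ hq
  simp only [G_eq_sum_quantileScore_mul_log]
  have : Nonempty (Fin n) := ⟨⟨0, hn⟩⟩
  exact sum_lt_sum_of_nonempty univ_nonempty fun i _ =>
    strictMonoOn_quantileScore_mul_log hα (hx i) hq₁ hq₂ hq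

theorem hasDerivAt_EnL_eps (hq : ∀ i, x i ≠ q) :
    HasDerivAt (fun ε => EnL n α ε x q) (EnLogLoss n α x q) 0 :=
  (HasDerivAt.fun_sum fun i _ => hasDerivAt_L_eps (hq i)).const_mul _

theorem hasDerivAt_EnL_zero (hq : ∀ i, x i ≠ q) :
    HasDerivAt (EnL n α 0 x) ((1 / (n : ℝ)) * ∑ i, quantileScore α (x i) q) q :=
  (HasDerivAt.fun_sum fun i _ => hasDerivAt_L_zero (hq i)).const_mul _

theorem hasDerivAt_EnLogLoss (hq : ∀ i, x i ≠ q) :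
    HasDerivAt (EnLogLoss n α x)
      ((1 / (n : ℝ)) * (G n x α q + ∑ i, quantileScore α (x i) q)) q := by
  rw [G_eq_sum_quantileScore_mul_log, ← sum_add_distrib]
  exact (HasDerivAt.fun_sum fun i _ => (hasDerivAt_L_zero_mul_log (hq i)).congr_deriv
    (mul_add_one _ _)).const_mul _

end Empirical

theorem stmt_6_general (n : ℕ) (hn : 1 ≤ n) (x : Fin n → ℝ) (α : ℝ)
    (hα : α ∈ Set.Ioo (0 : ℝ) 1) (qL qH : ℝ)
    (hgap : ∀ i, x i ∉ Set.Ioo qL qH)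
    (hF : ∀ q ∈ Set.Ico qL qH, Fn n x q = α)
    (qlog : ℝ) (hqlog : qlog ∈ Set.Ioo qL qH) (hzero : G n x α qlog = 0)
    (qe : ℝ → ℝ) (hqe : ∀ ε : ℝ, 0 < ε → IsMinOn (EnL n α ε x) Set.univ (qe ε)) :
    Filter.Tendsto qe (nhdsWithin 0 (Set.Ioi 0)) (nhds qlog) := by
  have hI : ∀ q ∈ Set.Ioo qL qH, ∀ i, x i ≠ q := fun q hq i h => hgap i (h ▸ hq)
  have hscore : ∀ q ∈ Set.Ioo qL qH, ∑ i, quantileScore α (x i) q = 0 := fun q hq => by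
    rw [sum_quantileScore (by omega), hF q (Set.Ioo_subset_Ico_self hq), sub_self, mul_zero]
  have hflat : ∀ c ∈ Set.Ioo qL qH, EnL n α 0 x qlog = EnL n α 0 x c := fun c hc =>
    isOpen_Ioo.is_const_of_deriv_eq_zero isPreconnected_Ioo
      (fun q hq => (hasDerivAt_EnL_zero (hI q hq)).differentiableAt.differentiableWithinAt)
      (fun q hq => by rw [(hasDerivAt_EnL_zero (hI q hq)).deriv, hscore q hq, mul_zero]; rfl)
      hqlog hc
  have hlog : ∀ c ∈ Set.Ioo qL qH, c ≠ qlog → EnLogLoss n α x qlog < EnLogLoss n α x c := by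
    have hderiv (q : ℝ) (hq : q ∈ Set.Ioo qL qH) :
        HasDerivAt (EnLogLoss n α x) (1 / (n : ℝ) * G n x α q) q := by
      simpa only [hscore q hq, add_zero] using hasDerivAt_EnLogLoss (α := α) (hI q hq)
    have hmono : StrictMonoOn (fun q => 1 / (n : ℝ) * G n x α q) (Set.Ioo qL qH) :=
      fun a ha b hb hab =>
        mul_lt_mul_of_pos_left (strictMonoOn_G hα hn hgap ha hb hab) (by positivity)
    exact fun c hc hcq => lt_of_hasDerivAt_of_strictMonoOn Set.ordConnected_Ioo hderiv hmono
      hqlog (by rw [hzero, mul_zero]) hc hcq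
  refine tendsto_of_isMinOn_of_convexOn
    (eventually_mem_nhdsWithin.mono fun ε hε => convexOn_EnL (Set.Ioo_subset_Icc_self hα) hε.le)
    (eventually_mem_nhdsWithin.mono hqe) ?_
  filter_upwards [nhdsWithin_le_nhds (Ioo_mem_nhds hqlog.1 hqlog.2), self_mem_nhdsWithin]
    with c hc hcq
  exact eventually_lt_of_hasDerivAt (hasDerivAt_EnL_eps (hI qlog hqlog))
    (hasDerivAt_EnL_eps (hI c hc)) (hflat c hc) (hlog c hc hcq)

theorem stmt_6 (n : ℕ) (hn : 1 ≤ n) (x : Fin n → ℝ) (α : ℝ)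
    (hα : α ∈ Set.Ioo (0 : ℝ) 1) (qL qH : ℝ) (hLH : qL < qH)
    (hqL : ∃ i, x i = qL) (hqH : ∃ i, x i = qH)
    (hgap : ∀ i, x i ∉ Set.Ioo qL qH)
    (hF : ∀ q ∈ Set.Ico qL qH, Fn n x q = α)
    (qlog : ℝ) (hqlog : qlog ∈ Set.Ioo qL qH) (hzero : G n x α qlog = 0)
    (qe : ℝ → ℝ) (hqe : ∀ ε : ℝ, 0 < ε → IsMinOn (EnL n α ε x) Set.univ (qe ε)) :
    Filter.Tendsto qe (nhdsWithin 0 (Set.Ioi 0)) (nhds qlog) :=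
  stmt_6_general n hn x α hα qL qH hgap hF qlog hqlog hzero qe hqe
end

section
/- If the log-moment balance equation (1-α) Σ_{i: x_i < q} log(q − x_i) = α Σ_{i: x_i > q} log(x_i − q) holds at some q in an open interval containing no sample points, and also holds at q' in the same interval with q < q', then q = q' (i.e., the solution is unique on any sample-free interval). -/
/-!
On a sample-free interval `(a, b)` the index sets `{i | x i < q}` and `{i | q < x i}` do not
depend on `q`, so the difference of the two sides of the balance equation is a strictly
increasing function of `q` there: the left side is a positive multiple of a nonempty sum of
strictly increasing logarithms and the right side a nonnegative multiple of decreasing ones.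
A strictly monotone function has at most one zero.
-/

open Finset Real

section

variable {ι : Type*} (s t : Finset ι) (x : ι → ℝ) {a b q : ℝ}

theorem filter_lt_eq_filter_le_of_mem_Ioo (hgap : ∀ i ∈ s, x i ∉ Set.Ioo a b)
    (hq : q ∈ Set.Ioo a b) : s.filter (fun i => x i < q) = s.filter (fun i => x i ≤ a) := by
  ext i
  simp only [mem_filter, and_congr_right_iff]
  intro hi
  constructor
  · intro h
    by_contra! ha
    exact hgap i hi ⟨ha, h.trans hq.2⟩
  · intro h
    exact h.trans_lt hq.1

theorem filter_gt_eq_filter_ge_of_mem_Ioo (hgap : ∀ i ∈ s, x i ∉ Set.Ioo a b)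
    (hq : q ∈ Set.Ioo a b) : s.filter (fun i => q < x i) = s.filter (fun i => b ≤ x i) := by
  ext i
  simp only [mem_filter, and_congr_right_iff]
  intro hi
  constructor
  · intro h
    by_contra! hb
    exact hgap i hi ⟨hq.1.trans h, hb⟩
  · intro h
    exact hq.2.trans_le h

theorem strictMonoOn_sum_log_sub (hs : s.Nonempty) (hx : ∀ i ∈ s, x i ≤ a) :
    StrictMonoOn (fun q => ∑ i ∈ s, log (q - x i)) (Set.Ioi a) := by
  intro u hu v _ huv
  refine sum_lt_sum_of_nonempty hs fun i hi => log_lt_log ?_ (by linarith)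
  linarith [hx i hi, Set.mem_Ioi.mp hu]

theorem antitoneOn_sum_log_sub (hx : ∀ i ∈ t, b ≤ x i) :
    AntitoneOn (fun q => ∑ i ∈ t, log (x i - q)) (Set.Iio b) := by
  intro u _ v hv huv
  refine sum_le_sum fun i hi => log_le_log ?_ (by linarith)
  linarith [hx i hi, Set.mem_Iio.mp hv]

theorem strictMonoOn_log_balance {α : ℝ} (hα₀ : 0 ≤ α) (hα₁ : α < 1) (hs : s.Nonempty)
    (hxs : ∀ i ∈ s, x i ≤ a) (hxt : ∀ i ∈ t, b ≤ x i) :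
    StrictMonoOn (fun q => (1 - α) * ∑ i ∈ s, log (q - x i) - α * ∑ i ∈ t, log (x i - q))
      (Set.Ioo a b) := by
  intro u hu v hv huv
  have hlower := strictMonoOn_sum_log_sub s x hs hxs hu.1 hv.1 huv
  have hupper := antitoneOn_sum_log_sub t x hxt hu.2 hv.2 huv.le
  have := mul_lt_mul_of_pos_left hlower (sub_pos.mpr hα₁)
  have := mul_le_mul_of_nonneg_left hupper hα₀
  simp only
  linarith

end

theorem stmt_17_general (n : ℕ) (x : Fin n → ℝ) (α : ℝ)
    (hα : α ∈ Set.Ioo (0 : ℝ) 1) (a b : ℝ)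
    (hgap : ∀ i, x i ∉ Set.Ioo a b)
    (hbelow : ∃ i, x i ≤ a)
    (q q' : ℝ) (hq : q ∈ Set.Ioo a b) (hq' : q' ∈ Set.Ioo a b)
    (hbal : (1 - α) * ∑ i ∈ Finset.univ.filter (fun i => x i < q), Real.log (q - x i)
      = α * ∑ i ∈ Finset.univ.filter (fun i => q < x i), Real.log (x i - q))
    (hbal' : (1 - α) * ∑ i ∈ Finset.univ.filter (fun i => x i < q'), Real.log (q' - x i)
      = α * ∑ i ∈ Finset.univ.filter (fun i => q' < x i), Real.log (x i - q')) :
    q = q' := by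
  have hgap' : ∀ i ∈ univ, x i ∉ Set.Ioo a b := fun i _ => hgap i
  rw [filter_lt_eq_filter_le_of_mem_Ioo _ _ hgap' hq,
    filter_gt_eq_filter_ge_of_mem_Ioo _ _ hgap' hq] at hbal
  rw [filter_lt_eq_filter_le_of_mem_Ioo _ _ hgap' hq',
    filter_gt_eq_filter_ge_of_mem_Ioo _ _ hgap' hq'] at hbal'
  obtain ⟨i₀, hi₀⟩ := hbelow
  have hmono := strictMonoOn_log_balance (univ.filter fun i => x i ≤ a)
    (univ.filter fun i => b ≤ x i) x hα.1.le hα.2 ⟨i₀, by simpa using hi₀⟩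
    (fun i hi => (mem_filter.mp hi).2) (fun i hi => (mem_filter.mp hi).2)
  exact hmono.injOn hq hq' (by linarith)

theorem stmt_17 (n : ℕ) (hn : 1 ≤ n) (x : Fin n → ℝ) (α : ℝ)
    (hα : α ∈ Set.Ioo (0 : ℝ) 1) (a b : ℝ) (hab : a < b)
    (hgap : ∀ i, x i ∉ Set.Ioo a b)
    (hbelow : ∃ i, x i ≤ a) (habove : ∃ i, b ≤ x i)
    (q q' : ℝ) (hq : q ∈ Set.Ioo a b) (hq' : q' ∈ Set.Ioo a b)
    (hbal : (1 - α) * ∑ i ∈ Finset.univ.filter (fun i => x i < q), Real.log (q - x i)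
      = α * ∑ i ∈ Finset.univ.filter (fun i => q < x i), Real.log (x i - q))
    (hbal' : (1 - α) * ∑ i ∈ Finset.univ.filter (fun i => x i < q'), Real.log (q' - x i)
      = α * ∑ i ∈ Finset.univ.filter (fun i => q' < x i), Real.log (x i - q')) :
    q = q' :=
  stmt_17_general n x α hα a b hgap hbelow q q' hq hq' hbal hbal'
end
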